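/- An Apollonian network with n vertices has exactly n - 4 separating triangles. -/

import Mathlib

open SimpleGraph

/-- The complete graph `K4` on the vertices `{0,1,2,3}` of `ℕ`. -/
def K4n : SimpleGraph ℕ where
  Adj x y := x ≠ y ∧ x < 4 ∧ y < 4
  symm := ⟨fun _ _ h => ⟨h.1.symm, h.2.2, h.2.1⟩⟩
  loopless := ⟨fun _ h => h.1 rfl⟩

/-- Add a new apex vertex `v` joined to the three vertices `a`, `b`, `c`. -/
def addApex (G : SimpleGraph ℕ) (v a b c : ℕ) : SimpleGraph ℕ :=
  G ⊔ SimpleGraph.fromEdgeSet {s(v, a), s(v, b), s(v, c)}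

/-- `ApollonianF G Fs` : `G` is an Apollonian network with set of (triangular) faces `Fs`,
built from `K4` by recursively subdividing a triangular face. -/
inductive ApollonianF : SimpleGraph ℕ → Set (Finset ℕ) → Prop
  | base : ApollonianF K4n {{0, 1, 2}, {0, 1, 3}, {0, 2, 3}, {1, 2, 3}}
  | subdivide (G : SimpleGraph ℕ) (Fs : Set (Finset ℕ)) (a b c v : ℕ) :
      ApollonianF G Fs → ({a, b, c} : Finset ℕ) ∈ Fs →
      (∀ y, ¬ G.Adj v y) →
      ApollonianF (addApex G v a b c)
        ((Fs \ {({a, b, c} : Finset ℕ)}) ∪ {{v, a, b}, {v, a, c}, {v, b, c}})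

/-- A graph (on vertex set its support) is an Apollonian network. -/
def IsApollonian (G : SimpleGraph ℕ) : Prop := ∃ Fs, ApollonianF G Fs

/-- The triangles (sets of three pairwise adjacent vertices) of `G`. -/
def triangleSet (G : SimpleGraph ℕ) : Set (Finset ℕ) :=
  {t | ∃ a b c : ℕ, t = {a, b, c} ∧ G.Adj a b ∧ G.Adj a c ∧ G.Adj b c}

/-- A triangle is separating if deleting its vertices disconnects the graph. -/
def IsSeparatingTriangle (G : SimpleGraph ℕ) (t : Finset ℕ) : Prop :=
  t ∈ triangleSet G ∧ ¬ (G.induce (G.support \ ↑t)).Connected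

/-- `G` is (isomorphic to) the complete graph on four vertices. -/
def IsK4Graph (G : SimpleGraph ℕ) : Prop :=
  ∃ s : Finset ℕ, ↑s = G.support ∧ s.card = 4 ∧ ∀ a ∈ s, ∀ b ∈ s, a ≠ b → G.Adj a b

/-- Delete the vertex `v` (and all incident edges). -/
def deleteVertex (G : SimpleGraph ℕ) (v : ℕ) : SimpleGraph ℕ where
  Adj x y := G.Adj x y ∧ x ≠ v ∧ y ≠ v
  symm := ⟨fun _ _ h => ⟨h.1.symm, h.2.2, h.2.1⟩⟩
  loopless := ⟨fun x h => G.loopless.1 x h.1⟩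

/-!
Induct along the construction. The invariant is that the graph stays connected after deleting
any two vertices and that every current face is a non-separating triangle. Subdividing the face
`abc` by a fresh apex `v` isolates `v` once `a, b, c` are deleted, so `abc` becomes separating.
The new faces `vxy` are not separating, since deleting them removes only two old vertices.
For every other triangle `t` of the old graph, some vertex of `abc` survives the deletion of `t`.
Adding `v` there neither creates nor destroys separation, because `v` can be contracted onto that
vertex. So each subdivision adds exactly one separating triangle and one vertex, and `K4` has
none.
-/

namespace SimpleGraph

variable {V : Type*} {G : SimpleGraph V}

lemma Reachable.map_of_adj_imp_eq_or_adj {W : Type*} {H : SimpleGraph W} (f : V → W)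
    (hf : ∀ x y, G.Adj x y → f x = f y ∨ H.Adj (f x) (f y)) {x y : V}
    (h : G.Reachable x y) : H.Reachable (f x) (f y) := by
  obtain ⟨p⟩ := h
  induction p with
  | nil => rfl
  | cons hadj _ ih =>
    rcases hf _ _ hadj with heq | hadj'
    · exact heq ▸ ih
    · exact hadj'.reachable.trans ih

lemma connected_induce_insert {s : Set V} {v w : V} (hw : w ∈ s) (hvw : G.Adj v w)
    (hs : (G.induce s).Connected) : (G.induce (insert v s)).Connected := by
  rw [Set.insert_eq]
  exact connected_induce_union (by simp) hs.preconnected rfl hw hvw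

/-- Contracting the edge from `v` to `w` retracts `G.induce (insert v s)` onto `G.induce s`. -/
lemma connected_induce_of_connected_induce_insert {s : Set V} {v w : V} (hvs : v ∉ s)
    (hw : w ∈ s) (hN : ∀ u ∈ s, G.Adj v u → u = w ∨ G.Adj u w)
    (h : (G.induce (insert v s)).Connected) : (G.induce s).Connected := by
  classical
  let f : ↥(insert v s) → ↥s := fun z =>
    if hz : (z : V) = v then ⟨w, hw⟩ else ⟨z, z.2.resolve_left hz⟩
  have hf_apex : f ⟨v, Set.mem_insert v s⟩ = ⟨w, hw⟩ := dif_pos rfl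
  have hf : ∀ z : s, f ⟨z, Set.mem_insert_of_mem v z.2⟩ = z := fun z =>
    dif_neg (ne_of_mem_of_not_mem z.2 hvs)
  have hf_adj : ∀ u (hu : u ∈ s), G.Adj v u →
      (⟨w, hw⟩ : s) = ⟨u, hu⟩ ∨ (G.induce s).Adj ⟨w, hw⟩ ⟨u, hu⟩ := fun u hu hvu =>
    (hN u hu hvu).imp (fun h => Subtype.ext h.symm) Adj.symm
  refine (connected_iff _).2 ⟨fun x y => ?_, ⟨⟨w, hw⟩⟩⟩
  rw [← hf x, ← hf y]
  refine (h.preconnected _ _).map_of_adj_imp_eq_or_adj f ?_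
  rintro ⟨x, hx | hx⟩ ⟨y, hy | hy⟩ (hxy : G.Adj x y)
  · exact absurd (hx.trans hy.symm) hxy.ne
  · subst hx; rw [hf_apex, hf ⟨y, hy⟩]; exact hf_adj y hy hxy
  · subst hy; rw [hf_apex, hf ⟨x, hx⟩]; exact (hf_adj x hx hxy.symm).imp Eq.symm Adj.symm
  · rw [hf ⟨x, hx⟩, hf ⟨y, hy⟩]; exact Or.inr hxy

lemma connected_induce_insert_iff {s : Set V} {v w : V} (hvs : v ∉ s) (hw : w ∈ s)
    (hvw : G.Adj v w) (hN : ∀ u ∈ s, G.Adj v u → u = w ∨ G.Adj u w) :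
    (G.induce (insert v s)).Connected ↔ (G.induce s).Connected :=
  ⟨connected_induce_of_connected_induce_insert hvs hw hN, connected_induce_insert hw hvw⟩

lemma not_connected_induce_insert {s : Set V} {v : V} (hvs : v ∉ s) (hs : s.Nonempty)
    (hN : ∀ u ∈ s, ¬ G.Adj v u) : ¬ (G.induce (insert v s)).Connected := by
  intro h
  obtain ⟨x, hx⟩ := hs
  obtain ⟨p⟩ := h.preconnected ⟨v, Set.mem_insert v s⟩ ⟨x, Set.mem_insert_of_mem v hx⟩
  cases p with
  | nil => exact hvs (by simpa using hx)
  | @cons _ u _ hvu _ =>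
    have hvu : G.Adj v u := hvu
    exact u.2.elim (fun h => hvu.ne h.symm) (hN u · hvu)

lemma IsNClique.coe_subset_support {n : ℕ} {t : Finset V} (h : G.IsNClique n t) (hn : 1 < n) :
    ↑t ⊆ G.support := by
  intro x hx
  obtain ⟨y, hy, hyx⟩ := Finset.exists_mem_ne (h.card_eq ▸ hn) x
  exact ⟨y, h.isClique hx hy hyx.symm⟩

end SimpleGraph

lemma mem_triangleSet_iff {G : SimpleGraph ℕ} {t : Finset ℕ} :
    t ∈ triangleSet G ↔ G.IsNClique 3 t := by
  rw [is3Clique_iff]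
  constructor
  · rintro ⟨a, b, c, rfl, hab, hac, hbc⟩
    exact ⟨a, b, c, hab, hac, hbc, rfl⟩
  · rintro ⟨a, b, c, hab, hac, hbc, rfl⟩
    exact ⟨a, b, c, rfl, hab, hac, hbc⟩

lemma coe_subset_support_of_mem_triangleSet {G : SimpleGraph ℕ} {t : Finset ℕ}
    (ht : t ∈ triangleSet G) : ↑t ⊆ G.support :=
  (mem_triangleSet_iff.1 ht).coe_subset_support (by norm_num)

def ConnectedAfterDeletion (G : SimpleGraph ℕ) (k : ℕ) : Prop :=
  ∀ t : Finset ℕ, t.card ≤ k → (G.induce (G.support \ ↑t)).Connected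

section addApex

variable {G : SimpleGraph ℕ} {v a b c : ℕ}

lemma addApex_adj {x y : ℕ} :
    (addApex G v a b c).Adj x y ↔ G.Adj x y ∨
      x ≠ y ∧ (x = v ∧ (y = a ∨ y = b ∨ y = c) ∨ y = v ∧ (x = a ∨ x = b ∨ x = c)) := by
  simp only [addApex, sup_adj, fromEdgeSet_adj, Set.mem_insert_iff, Set.mem_singleton_iff,
    Sym2.eq_iff]
  aesop

lemma le_addApex : G ≤ addApex G v a b c := le_sup_left

lemma induce_addApex_of_notMem {s : Set ℕ} (hvs : v ∉ s) :
    (addApex G v a b c).induce s = G.induce s := by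
  ext ⟨x, hx⟩ ⟨y, hy⟩
  simp only [comap_adj, Function.Embedding.coe_subtype, addApex_adj]
  constructor
  · rintro (h | ⟨-, ⟨rfl, -⟩ | ⟨rfl, -⟩⟩)
    exacts [h, absurd hx hvs, absurd hy hvs]
  · exact Or.inl

lemma isNClique_of_isNClique_addApex {n : ℕ} {t : Finset ℕ}
    (h : (addApex G v a b c).IsNClique n t) (hvt : v ∉ t) : G.IsNClique n t := by
  refine ⟨fun x hx y hy hxy => ?_, h.card_eq⟩
  rcases addApex_adj.1 (h.isClique hx hy hxy) with h | ⟨-, ⟨rfl, -⟩ | ⟨rfl, -⟩⟩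
  exacts [h, absurd hx hvt, absurd hy hvt]

lemma addApex_adj_apex {u : ℕ} (hvu : v ≠ u) (hu : u ∈ ({a, b, c} : Finset ℕ)) :
    (addApex G v a b c).Adj v u :=
  addApex_adj.2 (Or.inr ⟨hvu, Or.inl ⟨rfl, by simpa using hu⟩⟩)

lemma support_addApex (hv : v ∉ G.support) (habc : G.IsNClique 3 {a, b, c}) :
    (addApex G v a b c).support = insert v G.support := by
  have habc_supp := habc.coe_subset_support (by norm_num)
  have ha : a ∈ G.support := habc_supp (by simp)
  ext x
  constructor
  · rintro ⟨y, hxy⟩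
    rcases addApex_adj.1 hxy with h | ⟨-, ⟨rfl, -⟩ | ⟨-, hx⟩⟩
    · exact Or.inr ⟨y, h⟩
    · exact Or.inl rfl
    · exact Or.inr (habc_supp (by simpa using hx))
  · rintro (rfl | ⟨y, h⟩)
    · exact ⟨a, addApex_adj_apex (fun h => hv (h ▸ ha)) (by simp)⟩
    · exact ⟨y, le_addApex h⟩

lemma insert_mem_triangleSet_addApex (hv : v ∉ G.support)
    (habc : G.IsClique (({a, b, c} : Finset ℕ) : Set ℕ)) {x y : ℕ}
    (hx : x ∈ ({a, b, c} : Finset ℕ)) (hy : y ∈ ({a, b, c} : Finset ℕ)) (hxy : x ≠ y) :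
    {v, x, y} ∈ triangleSet (addApex G v a b c) := by
  have hxy' : G.Adj x y := habc hx hy hxy
  refine mem_triangleSet_iff.2 (is3Clique_triple_iff.2 ⟨?_, ?_, le_addApex hxy'⟩)
  · exact addApex_adj_apex (fun h => hv (h ▸ ⟨y, hxy'⟩)) hx
  · exact addApex_adj_apex (fun h => hv (h ▸ ⟨x, hxy'.symm⟩)) hy

lemma mem_of_addApex_adj_apex (hv : v ∉ G.support) {u : ℕ} (h : (addApex G v a b c).Adj v u) :
    u ∈ ({a, b, c} : Finset ℕ) := by
  rcases addApex_adj.1 h with h | ⟨-, ⟨-, hu⟩ | ⟨rfl, -⟩⟩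
  · exact absurd ⟨u, h⟩ hv
  · simpa using hu
  · exact absurd rfl h.ne

lemma connected_induce_addApex_insert_iff (hv : v ∉ G.support)
    (habc : G.IsClique (({a, b, c} : Finset ℕ) : Set ℕ)) {s : Set ℕ} (hvs : v ∉ s) {w : ℕ}
    (hws : w ∈ s) (hw : w ∈ ({a, b, c} : Finset ℕ)) :
    ((addApex G v a b c).induce (insert v s)).Connected ↔ (G.induce s).Connected := by
  have hvw : v ≠ w := (ne_of_mem_of_not_mem hws hvs).symm
  rw [connected_induce_insert_iff hvs hws, induce_addApex_of_notMem hvs]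
  · exact addApex_adj_apex hvw hw
  · intro u _ hvu
    by_cases huw : u = w
    · exact Or.inl huw
    · exact Or.inr (le_addApex (habc (mem_of_addApex_adj_apex hv hvu) hw huw))

lemma not_connected_induce_addApex_insert (hv : v ∉ G.support) {s : Set ℕ} (hvs : v ∉ s)
    (hs : s.Nonempty) (habc : ∀ u ∈ s, u ∉ ({a, b, c} : Finset ℕ)) :
    ¬ ((addApex G v a b c).induce (insert v s)).Connected :=
  not_connected_induce_insert hvs hs fun u hu hvu => habc u hu (mem_of_addApex_adj_apex hv hvu)

lemma support_addApex_diff_of_mem (hv : v ∉ G.support) (habc : G.IsNClique 3 {a, b, c})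
    {t : Finset ℕ} (hvt : v ∈ t) :
    (addApex G v a b c).support \ ↑t = G.support \ ↑(t.erase v) := by
  rw [support_addApex hv habc, Set.insert_sdiff_of_mem _ hvt, Finset.coe_erase,
    Set.sdiff_sdiff_right, Set.inter_singleton_eq_empty.2 hv, Set.union_empty]

lemma support_addApex_diff_of_notMem (hv : v ∉ G.support) (habc : G.IsNClique 3 {a, b, c})
    {t : Finset ℕ} (hvt : v ∉ t) :
    (addApex G v a b c).support \ ↑t = insert v (G.support \ ↑t) := by
  rw [support_addApex hv habc, Set.insert_sdiff_of_notMem _ (Finset.mem_coe.not.2 hvt)]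

lemma connected_induce_support_addApex_diff_iff (hv : v ∉ G.support)
    (habc : G.IsNClique 3 {a, b, c}) {t : Finset ℕ} (hvt : v ∉ t)
    (hw : ∃ w ∈ ({a, b, c} : Finset ℕ), w ∉ t) :
    ((addApex G v a b c).induce ((addApex G v a b c).support \ ↑t)).Connected ↔
      (G.induce (G.support \ ↑t)).Connected := by
  obtain ⟨w, hw, hwt⟩ := hw
  rw [support_addApex_diff_of_notMem hv habc hvt]
  exact connected_induce_addApex_insert_iff hv habc.isClique (fun h => hv h.1)
    ⟨habc.coe_subset_support (by norm_num) hw, hwt⟩ hw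

lemma ConnectedAfterDeletion.addApex (hv : v ∉ G.support) (habc : G.IsNClique 3 {a, b, c})
    (hG : ConnectedAfterDeletion G 2) : ConnectedAfterDeletion (addApex G v a b c) 2 := by
  intro t ht
  by_cases hvt : v ∈ t
  · rw [support_addApex_diff_of_mem hv habc hvt, induce_addApex_of_notMem (fun h => hv h.1)]
    exact hG _ ((Finset.card_erase_le).trans ht)
  · refine (connected_induce_support_addApex_diff_iff hv habc hvt ?_).2 (hG t ht)
    exact Finset.exists_mem_notMem_of_card_lt_card (by rw [habc.card_eq]; omega)

lemma not_isSeparatingTriangle_addApex_of_mem (hv : v ∉ G.support)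
    (habc : G.IsNClique 3 {a, b, c}) (hG : ConnectedAfterDeletion G 2) {t : Finset ℕ}
    (hvt : v ∈ t) : ¬ IsSeparatingTriangle (addApex G v a b c) t := by
  rintro ⟨ht, hsep⟩
  apply hsep
  rw [support_addApex_diff_of_mem hv habc hvt, induce_addApex_of_notMem (fun h => hv h.1)]
  apply hG
  rw [Finset.card_erase_of_mem hvt, (mem_triangleSet_iff.1 ht).card_eq]

lemma isSeparatingTriangle_addApex_iff (hv : v ∉ G.support) (habc : G.IsNClique 3 {a, b, c})
    {t : Finset ℕ} (hvt : v ∉ t) (hne : t ≠ {a, b, c}) :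
    IsSeparatingTriangle (addApex G v a b c) t ↔ IsSeparatingTriangle G t := by
  have htri : t ∈ triangleSet (addApex G v a b c) ↔ t ∈ triangleSet G := by
    simp only [mem_triangleSet_iff]
    exact ⟨(isNClique_of_isNClique_addApex · hvt), (·.mono le_addApex)⟩
  unfold IsSeparatingTriangle
  rw [htri]
  refine and_congr_right fun ht => not_congr ?_
  have ht := mem_triangleSet_iff.1 ht
  refine connected_induce_support_addApex_diff_iff hv habc hvt ?_
  by_contra! hsub
  exact hne (Finset.eq_of_subset_of_card_le hsub (by rw [ht.card_eq, habc.card_eq])).symm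

lemma isSeparatingTriangle_addApex_self (hv : v ∉ G.support) (habc : G.IsNClique 3 {a, b, c})
    (hout : (G.support \ ↑({a, b, c} : Finset ℕ)).Nonempty) :
    IsSeparatingTriangle (addApex G v a b c) {a, b, c} := by
  have hvt : v ∉ ({a, b, c} : Finset ℕ) := fun h => hv (habc.coe_subset_support (by norm_num) h)
  refine ⟨mem_triangleSet_iff.2 (habc.mono le_addApex), ?_⟩
  rw [support_addApex_diff_of_notMem hv habc hvt]
  exact not_connected_induce_addApex_insert hv (fun h => hv h.1) hout fun u hu => hu.2

lemma setOf_isSeparatingTriangle_addApex (hv : v ∉ G.support)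
    (habc : G.IsNClique 3 {a, b, c}) (hG : ConnectedAfterDeletion G 2)
    (hout : (G.support \ ↑({a, b, c} : Finset ℕ)).Nonempty) :
    {t | IsSeparatingTriangle (addApex G v a b c) t} =
      insert {a, b, c} {t | IsSeparatingTriangle G t} := by
  ext t
  simp only [Set.mem_ofPred_eq, Set.mem_insert_iff]
  by_cases hvt : v ∈ t
  · have hGt : ¬ IsSeparatingTriangle G t := fun h =>
      hv (coe_subset_support_of_mem_triangleSet h.1 hvt)
    have hne : t ≠ {a, b, c} := by
      rintro rfl
      exact hv (habc.coe_subset_support (by norm_num) hvt)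
    simp only [not_isSeparatingTriangle_addApex_of_mem hv habc hG hvt, hGt, hne, or_self]
  · by_cases hne : t = {a, b, c}
    · subst hne
      simp only [isSeparatingTriangle_addApex_self hv habc hout, true_or]
    · rw [isSeparatingTriangle_addApex_iff hv habc hvt hne]
      simp only [hne, false_or]

end addApex

lemma K4n_support : K4n.support = ↑(Finset.range 4) := by
  ext x
  simp only [mem_support, Finset.coe_range, Set.mem_Iio]
  refine ⟨fun ⟨_, hxy⟩ => hxy.2.1, fun hx => ⟨if x = 0 then 1 else 0, ?_, hx, ?_⟩⟩ <;>
    split_ifs <;> omega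

lemma ncard_K4n_support : K4n.support.ncard = 4 := by
  rw [K4n_support, Set.ncard_coe_finset, Finset.card_range]

lemma connected_induce_K4n_support_diff {t : Finset ℕ} (ht : t.card < 4) :
    (K4n.induce (K4n.support \ ↑t)).Connected := by
  have hne : (K4n.support \ ↑t).Nonempty :=
    Set.sdiff_nonempty_of_ncard_lt_ncard (by rwa [Set.ncard_coe_finset, ncard_K4n_support])
  have : Nonempty ↥(K4n.support \ ↑t) := hne.to_subtype
  refine (connected_iff _).2 ⟨fun x y => ?_, this⟩
  have h4 : ∀ z ∈ K4n.support, z < 4 := fun _ ⟨_, h⟩ => h.2.1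
  by_cases hxy : x = y
  · rw [hxy]
  · exact Adj.reachable (G := K4n.induce _)
      ⟨fun h => hxy (Subtype.ext h), h4 x x.2.1, h4 y y.2.1⟩

lemma not_isSeparatingTriangle_K4n (t : Finset ℕ) : ¬ IsSeparatingTriangle K4n t :=
  fun h => h.2 (connected_induce_K4n_support_diff (by
    rw [(mem_triangleSet_iff.1 h.1).card_eq]; norm_num))

lemma connectedAfterDeletion_K4n : ConnectedAfterDeletion K4n 2 :=
  fun _ ht => connected_induce_K4n_support_diff (by omega)

structure ApollonianInvariant (G : SimpleGraph ℕ) (Fs : Set (Finset ℕ)) : Prop where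
  finite_support : G.support.Finite
  four_le_ncard_support : 4 ≤ G.support.ncard
  face_mem_triangleSet : ∀ t ∈ Fs, t ∈ triangleSet G
  not_isSeparatingTriangle_face : ∀ t ∈ Fs, ¬ IsSeparatingTriangle G t
  connectedAfterDeletion : ConnectedAfterDeletion G 2
  ncard_setOf_isSeparatingTriangle : {t | IsSeparatingTriangle G t}.ncard = G.support.ncard - 4

lemma apollonianInvariant_K4n :
    ApollonianInvariant K4n {{0, 1, 2}, {0, 1, 3}, {0, 2, 3}, {1, 2, 3}} where
  finite_support := K4n_support ▸ Finset.finite_toSet _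
  four_le_ncard_support := ncard_K4n_support.ge
  face_mem_triangleSet := by
    have hadj : ∀ x y : ℕ, x ≠ y → x < 4 → y < 4 → K4n.Adj x y := fun _ _ h hx hy => ⟨h, hx, hy⟩
    simp only [Set.mem_insert_iff, Set.mem_singleton_iff, mem_triangleSet_iff]
    rintro t (rfl | rfl | rfl | rfl) <;>
      exact is3Clique_triple_iff.2 ⟨hadj _ _ (by omega) (by omega) (by omega),
        hadj _ _ (by omega) (by omega) (by omega), hadj _ _ (by omega) (by omega) (by omega)⟩
  not_isSeparatingTriangle_face t _ := not_isSeparatingTriangle_K4n t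
  connectedAfterDeletion := connectedAfterDeletion_K4n
  ncard_setOf_isSeparatingTriangle := by
    simp [not_isSeparatingTriangle_K4n, ncard_K4n_support]

lemma finite_setOf_isSeparatingTriangle {G : SimpleGraph ℕ} (h : G.support.Finite) :
    {t | IsSeparatingTriangle G t}.Finite :=
  h.toFinset.powerset.finite_toSet.subset fun t ht => by
    simpa [Finset.subset_iff] using coe_subset_support_of_mem_triangleSet ht.1

lemma ApollonianInvariant.subdivide {G : SimpleGraph ℕ} {Fs : Set (Finset ℕ)} {a b c v : ℕ}
    (hG : ApollonianInvariant G Fs) (hface : {a, b, c} ∈ Fs) (hv : ∀ y, ¬ G.Adj v y) :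
    ApollonianInvariant (addApex G v a b c)
      ((Fs \ {{a, b, c}}) ∪ {{v, a, b}, {v, a, c}, {v, b, c}}) := by
  replace hv : v ∉ G.support := fun ⟨y, hy⟩ => hv y hy
  have habc := mem_triangleSet_iff.1 (hG.face_mem_triangleSet _ hface)
  have h4 := hG.four_le_ncard_support
  have hout : (G.support \ ↑({a, b, c} : Finset ℕ)).Nonempty :=
    Set.sdiff_nonempty_of_ncard_lt_ncard (by rw [Set.ncard_coe_finset, habc.card_eq]; omega)
  have hncard : (addApex G v a b c).support.ncard = G.support.ncard + 1 := by
    rw [support_addApex hv habc, Set.ncard_insert_of_notMem hv hG.finite_support]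
  have hvt : ∀ t ∈ Fs, v ∉ t := fun t ht hvt =>
    hv (coe_subset_support_of_mem_triangleSet (hG.face_mem_triangleSet t ht) hvt)
  have hnew : ∀ t ∈ ({{v, a, b}, {v, a, c}, {v, b, c}} : Set (Finset ℕ)),
      v ∈ t ∧ t ∈ triangleSet (addApex G v a b c) := by
    obtain ⟨hab, hac, hbc⟩ := is3Clique_triple_iff.1 habc
    simp only [Set.mem_insert_iff, Set.mem_singleton_iff]
    rintro t (rfl | rfl | rfl) <;>
      refine ⟨by simp, insert_mem_triangleSet_addApex hv habc.isClique (by simp) (by simp) ?_⟩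
    exacts [hab.ne, hac.ne, hbc.ne]
  refine ⟨?_, by omega, ?_, ?_, hG.connectedAfterDeletion.addApex hv habc, ?_⟩
  · exact support_addApex hv habc ▸ hG.finite_support.insert v
  · rintro t (⟨htF, -⟩ | htnew)
    · exact mem_triangleSet_iff.2
        ((mem_triangleSet_iff.1 (hG.face_mem_triangleSet t htF)).mono le_addApex)
    · exact (hnew t htnew).2
  · rintro t (⟨htF, htne⟩ | htnew)
    · exact (isSeparatingTriangle_addApex_iff hv habc (hvt t htF) htne).not.2
        (hG.not_isSeparatingTriangle_face t htF)
    · exact not_isSeparatingTriangle_addApex_of_mem hv habc hG.connectedAfterDeletion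
        (hnew t htnew).1
  · rw [setOf_isSeparatingTriangle_addApex hv habc hG.connectedAfterDeletion hout,
      Set.ncard_insert_of_notMem (s := {t | IsSeparatingTriangle G t})
        (hG.not_isSeparatingTriangle_face _ hface)
        (finite_setOf_isSeparatingTriangle hG.finite_support),
      hG.ncard_setOf_isSeparatingTriangle, hncard]
    omega

lemma ApollonianF.apollonianInvariant {G : SimpleGraph ℕ} {Fs : Set (Finset ℕ)}
    (h : ApollonianF G Fs) : ApollonianInvariant G Fs := by
  induction h with
  | base => exact apollonianInvariant_K4n
  | subdivide _ _ _ _ _ _ _ hface hv ih => exact ih.subdivide hface hv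

/-- An Apollonian network with `n` vertices has exactly `n - 4`
separating triangles. -/
theorem stmt_1 (G : SimpleGraph ℕ) (hG : IsApollonian G) (n : ℕ)
    (hn : G.support.ncard = n) :
    {t : Finset ℕ | IsSeparatingTriangle G t}.ncard = n - 4 := by
  obtain ⟨Fs, hFs⟩ := hG
  exact hn ▸ hFs.apollonianInvariant.ncard_setOf_isSeparatingTriangle
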